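/- arXiv:1608.03382 — 8 statements merged into one kernel-verified Lean document; each statement's English description precedes it below -/
import Mathlib

section
/- For nonzero integers x, y, the equation (x+y)(1/x+1/y) = n has a solution only for n = 0 or n = 4. Equivalently, if x, y are nonzero integers and (x+y)^2 = n·x·y for some integer n, then n = 0 or n = 4. -/
theorem product_sum_two_reciprocals (n x y : ℤ) (hx : x ≠ 0) (hy : y ≠ 0)
    (h : ((x : ℚ) + y) * (1 / x + 1 / y) = n) : n = 0 ∨ n = 4 := by
  have hxQ : (x : ℚ) ≠ 0 := Int.cast_ne_zero.mpr hx
  have hyQ : (y : ℚ) ≠ 0 := Int.cast_ne_zero.mpr hy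
  have hq : ((x : ℚ) + y) ^ 2 = n * (x * y) := by
    field_simp at h
    ring_nf
    ring_nf at h
    linarith
  have h' : (x + y) ^ 2 = n * (x * y) := by exact_mod_cast hq
  -- reduce to coprime case
  set g : ℤ := (Int.gcd x y : ℤ) with hg
  have hg0 : g ≠ 0 := by
    simp [hg, Int.gcd_eq_zero_iff]
    tauto
  obtain ⟨a, ha⟩ : g ∣ x := Int.gcd_dvd_left x y
  obtain ⟨b, hb⟩ : g ∣ y := Int.gcd_dvd_right x y
  have ha0 : a ≠ 0 := by rintro rfl; simp at ha; tauto
  have hb0 : b ≠ 0 := by rintro rfl; simp at hb; tauto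
  have hcop : IsCoprime a b := by
    have := Int.gcd_div_gcd_div_gcd (i := x) (j := y) 
      (Int.gcd_pos_iff.mpr (Or.inl hx))
    rw [← Int.isCoprime_iff_gcd_eq_one] at this
    have hxa : x / g = a := by rw [ha]; exact Int.mul_ediv_cancel_left a hg0
    have hyb : y / g = b := by rw [hb]; exact Int.mul_ediv_cancel_left b hg0
    rwa [hxa, hyb] at this
  have key : (a + b) ^ 2 = n * (a * b) := by
    have : g ^ 2 * ((a + b) ^ 2) = g ^ 2 * (n * (a * b)) := by
      rw [ha, hb] at h'; ring_nf; ring_nf at h'; linarith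
    exact mul_left_cancel₀ (pow_ne_zero 2 hg0) this
  have hadvd : a ∣ b ^ 2 := ⟨n * b - a - 2 * b, by linear_combination key⟩
  have hbdvd : b ∣ a ^ 2 := ⟨n * a - b - 2 * a, by linear_combination key⟩
  have haunit : IsUnit a :=
    (hcop.pow_right (n := 2)).isUnit_of_dvd' dvd_rfl hadvd
  have hbunit : IsUnit b :=
    (hcop.symm.pow_right (n := 2)).isUnit_of_dvd' dvd_rfl hbdvd
  rw [Int.isUnit_iff] at haunit hbunit
  rcases haunit with rfl | rfl <;> rcases hbunit with rfl | rfl <;> omega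
end

section
/- For any integers m and n with n ≠ 1 and m ∉ {0, -1}, setting x = m^2+m+1, y = m(m+1)(n-1), z = (m+1)(n-1), w = -m(n-1), all four of x, y, z, w are nonzero and (x+y+z+w)(1/x+1/y+1/z+1/w) = n. Hence every integer n has infinitely many representations as the product of the sum of four nonzero integers with the sum of their reciprocals. -/
lemma main_part (m n : ℤ) (hn : n ≠ 1) (hm : m ≠ 0) (hm' : m ≠ -1) :
    (m ^ 2 + m + 1 : ℤ) ≠ 0 ∧ (m * (m + 1) * (n - 1) : ℤ) ≠ 0 ∧
      ((m + 1) * (n - 1) : ℤ) ≠ 0 ∧ (-(m * (n - 1)) : ℤ) ≠ 0 ∧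
      (((m ^ 2 + m + 1 : ℤ) : ℚ) + ((m * (m + 1) * (n - 1) : ℤ) : ℚ) +
          (((m + 1) * (n - 1) : ℤ) : ℚ) + ((-(m * (n - 1)) : ℤ) : ℚ)) *
        (1 / ((m ^ 2 + m + 1 : ℤ) : ℚ) + 1 / ((m * (m + 1) * (n - 1) : ℤ) : ℚ) +
          1 / (((m + 1) * (n - 1) : ℤ) : ℚ) + 1 / ((-(m * (n - 1)) : ℤ) : ℚ)) = n := by
  have h1 : (m ^ 2 + m + 1 : ℤ) ≠ 0 := by nlinarith [sq_nonneg (2*m+1)]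
  have hm1 : (m + 1 : ℤ) ≠ 0 := by omega
  have hn1 : (n - 1 : ℤ) ≠ 0 := by omega
  have h2 : (m * (m + 1) * (n - 1) : ℤ) ≠ 0 := by positivity
  have h3 : ((m + 1) * (n - 1) : ℤ) ≠ 0 := by positivity
  have h4 : (-(m * (n - 1)) : ℤ) ≠ 0 := by
    simp only [neg_ne_zero]; positivity
  refine ⟨h1, h2, h3, h4, ?_⟩
  have q1 : ((m ^ 2 + m + 1 : ℤ) : ℚ) ≠ 0 := by exact_mod_cast h1
  have qm : ((m : ℚ)) ≠ 0 := by exact_mod_cast hm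
  have qm1 : ((m : ℚ) + 1) ≠ 0 := by exact_mod_cast hm1
  have qn1 : ((n : ℚ) - 1) ≠ 0 := by exact_mod_cast hn1
  have q1' : (1 + (m:ℚ) + (m:ℚ)^2) ≠ 0 := by
    intro h; apply q1; push_cast; linear_combination h
  push_cast
  field_simp
  ring_nf
  rw [inv_eq_one_div]
  field_simp
  ring

lemma scale_mem (n : ℤ) (a b c d k : ℤ) (ha : a ≠ 0) (hb : b ≠ 0) (hc : c ≠ 0)
    (hd : d ≠ 0) (hk : k ≠ 0)
    (h : ((a : ℚ) + b + c + d) * (1 / (a : ℚ) + 1 / (b : ℚ) + 1 / (c : ℚ) + 1 / (d : ℚ)) = n) :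
    (k*a, k*b, k*c, k*d) ∈ {p : ℤ × ℤ × ℤ × ℤ | p.1 ≠ 0 ∧ p.2.1 ≠ 0 ∧ p.2.2.1 ≠ 0 ∧ p.2.2.2 ≠ 0 ∧
      ((p.1 : ℚ) + p.2.1 + p.2.2.1 + p.2.2.2) *
        (1 / (p.1 : ℚ) + 1 / (p.2.1 : ℚ) + 1 / (p.2.2.1 : ℚ) + 1 / (p.2.2.2 : ℚ)) = n} := by
  refine ⟨mul_ne_zero hk ha, mul_ne_zero hk hb, mul_ne_zero hk hc, mul_ne_zero hk hd, ?_⟩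
  have hkq : (k : ℚ) ≠ 0 := by exact_mod_cast hk
  have e1 : (((k*a : ℤ) : ℚ)) + ((k*b : ℤ) : ℚ) + ((k*c : ℤ) : ℚ) + ((k*d : ℤ) : ℚ)
      = (k : ℚ) * ((a : ℚ) + b + c + d) := by push_cast; ring
  have e2 : 1 / ((k*a : ℤ) : ℚ) + 1 / ((k*b : ℤ) : ℚ) + 1 / ((k*c : ℤ) : ℚ) + 1 / ((k*d : ℤ) : ℚ)
      = (k : ℚ)⁻¹ * (1 / (a : ℚ) + 1 / (b : ℚ) + 1 / (c : ℚ) + 1 / (d : ℚ)) := by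
    push_cast
    rw [mul_add, mul_add, mul_add]
    congr 1 <;> [skip; rw [one_div, mul_inv, one_div]]
    congr 1 <;> [skip; rw [one_div, mul_inv, one_div]]
    congr 1 <;> rw [one_div, mul_inv, one_div]
  show _ * _ = _
  rw [e1, e2, mul_mul_mul_comm, mul_inv_cancel₀ hkq, one_mul, h]

theorem four_integer_representation :
    (∀ m n : ℤ, n ≠ 1 → m ≠ 0 → m ≠ -1 →
      (m ^ 2 + m + 1 : ℤ) ≠ 0 ∧ (m * (m + 1) * (n - 1) : ℤ) ≠ 0 ∧
      ((m + 1) * (n - 1) : ℤ) ≠ 0 ∧ (-(m * (n - 1)) : ℤ) ≠ 0 ∧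
      (((m ^ 2 + m + 1 : ℤ) : ℚ) + ((m * (m + 1) * (n - 1) : ℤ) : ℚ) +
          (((m + 1) * (n - 1) : ℤ) : ℚ) + ((-(m * (n - 1)) : ℤ) : ℚ)) *
        (1 / ((m ^ 2 + m + 1 : ℤ) : ℚ) + 1 / ((m * (m + 1) * (n - 1) : ℤ) : ℚ) +
          1 / (((m + 1) * (n - 1) : ℤ) : ℚ) + 1 / ((-(m * (n - 1)) : ℤ) : ℚ)) = n) ∧
    ∀ n : ℤ, {p : ℤ × ℤ × ℤ × ℤ | p.1 ≠ 0 ∧ p.2.1 ≠ 0 ∧ p.2.2.1 ≠ 0 ∧ p.2.2.2 ≠ 0 ∧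
      ((p.1 : ℚ) + p.2.1 + p.2.2.1 + p.2.2.2) *
        (1 / (p.1 : ℚ) + 1 / (p.2.1 : ℚ) + 1 / (p.2.2.1 : ℚ) + 1 / (p.2.2.2 : ℚ)) = n}.Infinite := by
  constructor
  · exact main_part
  · intro n
    -- get one solution
    obtain ⟨a, b, c, d, ha, hb, hc, hd, h⟩ :
        ∃ a b c d : ℤ, a ≠ 0 ∧ b ≠ 0 ∧ c ≠ 0 ∧ d ≠ 0 ∧
          ((a : ℚ) + b + c + d) * (1 / (a : ℚ) + 1 / (b : ℚ) + 1 / (c : ℚ) + 1 / (d : ℚ)) = n := by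
      by_cases hn : n = 1
      · refine ⟨10, -14, -48, -60, by norm_num, by norm_num, by norm_num, by norm_num, ?_⟩
        subst hn; norm_num
      · obtain ⟨h1, h2, h3, h4, h5⟩ := main_part 1 n hn (by norm_num) (by norm_num)
        exact ⟨_, _, _, _, h1, h2, h3, h4, h5⟩
    apply Set.infinite_of_injective_forall_mem
      (f := fun i : ℕ => (((i : ℤ) + 1) * a, ((i : ℤ) + 1) * b, ((i : ℤ) + 1) * c, ((i : ℤ) + 1) * d))
    case hi =>
      intro i j hij
      simp only [Prod.mk.injEq] at hij
      have h2 : ((i : ℤ) + 1) = ((j : ℤ) + 1) := mul_right_cancel₀ ha hij.1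
      omega
    case hf =>
      intro i
      exact scale_mem n a b c d ((i : ℤ) + 1) ha hb hc hd (by positivity) h
end

section
/- If x, y, z, w are positive integers and (x+y+z+w)(1/x+1/y+1/z+1/w) is an integer strictly less than 17, then that integer equals 16 and x = y = z = w. -/
theorem integer_lt_seventeen (x y z w : ℤ) (hx : 0 < x) (hy : 0 < y) (hz : 0 < z) (hw : 0 < w)
    (n : ℤ) (hn : ((x : ℚ) + y + z + w) * (1 / x + 1 / y + 1 / z + 1 / w) = n)
    (hlt : n < 17) : n = 16 ∧ x = y ∧ y = z ∧ z = w := by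
  have hx0 : (x:ℚ) ≠ 0 := by positivity
  have hy0 : (y:ℚ) ≠ 0 := by positivity
  have hz0 : (z:ℚ) ≠ 0 := by positivity
  have hw0 : (w:ℚ) ≠ 0 := by positivity
  have hK : (x+y+z+w)*(y*z*w + x*z*w + x*y*w + x*y*z) = n * (x*y*z*w) := by
    field_simp at hn
    have h2 : ((x:ℚ) + y + z + w) * (((y + x) * z + x * y) * w + x * y * z) = n * (x * y * z * w) := by linear_combination hn
    have h3 := (Int.cast_injective (α := ℚ)) (by push_cast; linarith [h2] : ((((x+y+z+w)*(y*z*w + x*z*w + x*y*w + x*y*z) : ℤ) : ℚ)) = ((n * (x*y*z*w) : ℤ) : ℚ))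
    exact h3
  have hSOS : n * (x*y*z*w) - 16*(x*y*z*w) =
      z*w*(x-y)^2 + y*w*(x-z)^2 + y*z*(x-w)^2 + x*w*(y-z)^2 + x*z*(y-w)^2 + x*y*(z-w)^2 := by
    rw [← hK]; ring
  have hpos : 0 < x*y*z*w := by positivity
  have t1 : 0 ≤ z*w*(x-y)^2 := by positivity
  have t2 : 0 ≤ y*w*(x-z)^2 := by positivity
  have t3 : 0 ≤ y*z*(x-w)^2 := by positivity
  have t4 : 0 ≤ x*w*(y-z)^2 := by positivity
  have t5 : 0 ≤ x*z*(y-w)^2 := by positivity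
  have t6 : 0 ≤ x*y*(z-w)^2 := by positivity
  have hn16 : 16 ≤ n := by nlinarith
  have hn' : n = 16 := by omega
  subst hn'
  have hzero : z*w*(x-y)^2 + y*w*(x-z)^2 + y*z*(x-w)^2 + x*w*(y-z)^2 + x*z*(y-w)^2 + x*y*(z-w)^2 = 0 := by linarith [hSOS]
  have e1 : z*w*(x-y)^2 = 0 := by linarith
  have e4 : x*w*(y-z)^2 = 0 := by linarith
  have e6 : x*y*(z-w)^2 = 0 := by linarith
  have hxy : x = y := by
    have : (x-y)^2 = 0 := by
      rcases mul_eq_zero.1 e1 with h | h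
      · exact absurd h (by positivity)
      · exact h
    have := pow_eq_zero_iff (n := 2) (by norm_num) |>.1 this
    linarith
  have hyz : y = z := by
    have : (y-z)^2 = 0 := by
      rcases mul_eq_zero.1 e4 with h | h
      · exact absurd h (by positivity)
      · exact h
    have := pow_eq_zero_iff (n := 2) (by norm_num) |>.1 this
    linarith
  have hzw : z = w := by
    have : (z-w)^2 = 0 := by
      rcases mul_eq_zero.1 e6 with h | h
      · exact absurd h (by positivity)
      · exact h
    have := pow_eq_zero_iff (n := 2) (by norm_num) |>.1 this
    linarith
  exact ⟨rfl, hxy, hyz, hzw⟩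
end

section
/- For every integer k ≥ 1, with x = F_{2k-1}, y = F_{2k+1}, z = w = 2·F_{2k-1}·L_{2k}·F_{2k+1}, one has (x+y+z+w)(1/x+1/y+1/z+1/w) = 4·L_{4k} + 17, where F_j and L_j denote the Fibonacci and Lucas numbers. -/
/-- The Lucas numbers: L 0 = 2, L 1 = 1, L (n+2) = L (n+1) + L n. -/
def lucas : ℕ → ℕ
  | 0 => 2
  | 1 => 1
  | n + 2 => lucas (n + 1) + lucas n

lemma lucas_eq_fib (n : ℕ) : lucas (n + 1) = Nat.fib n + Nat.fib (n + 2) := by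
  induction n using Nat.twoStepInduction with
  | zero => rfl
  | one => rfl
  | more n ih1 ih2 =>
    show lucas (n + 2) + lucas (n + 1) = _
    rw [ih1, ih2]
    have h1 := Nat.fib_add_two (n := n + 2)
    have h2 := Nat.fib_add_two (n := n + 1)
    have h3 := Nat.fib_add_two (n := n)
    ring_nf at h1 h2 h3 ⊢
    linarith

lemma fibQ (n : ℕ) : (Nat.fib (n + 2) : ℚ) = Nat.fib n + Nat.fib (n + 1) := by
  rw [Nat.fib_add_two]; push_cast; ring

lemma cassini (n : ℕ) :
    (Nat.fib (2 * n + 1) : ℚ) * Nat.fib (2 * n + 3) = (Nat.fib (2 * n + 2) : ℚ) ^ 2 + 1 := by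
  induction n with
  | zero => norm_num
  | succ m ih =>
    have hb : (Nat.fib (2 * m + 3) : ℚ) = Nat.fib (2 * m + 1) + Nat.fib (2 * m + 2) := by
      have := fibQ (2 * m + 1)
      rw [show 2 * m + 1 + 2 = 2 * m + 3 by omega, show 2 * m + 1 + 1 = 2 * m + 2 by omega] at this
      exact this
    have hd : (Nat.fib (2 * m + 4) : ℚ) = Nat.fib (2 * m + 2) + Nat.fib (2 * m + 3) := by
      have := fibQ (2 * m + 2)
      rw [show 2 * m + 2 + 2 = 2 * m + 4 by omega, show 2 * m + 2 + 1 = 2 * m + 3 by omega] at this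
      exact this
    have he : (Nat.fib (2 * m + 5) : ℚ) = Nat.fib (2 * m + 3) + Nat.fib (2 * m + 4) := by
      have := fibQ (2 * m + 3)
      rw [show 2 * m + 3 + 2 = 2 * m + 5 by omega, show 2 * m + 3 + 1 = 2 * m + 4 by omega] at this
      exact this
    rw [show 2 * (m + 1) + 1 = 2 * m + 3 by omega, show 2 * (m + 1) + 2 = 2 * m + 4 by omega,
      show 2 * (m + 1) + 3 = 2 * m + 5 by omega, he, hd, hb]
    rw [hb] at ih
    linear_combination ih

lemma key (A C : ℚ) (hA : 0 < A) (hC : 0 ≤ C) (h : A * (A + C) = C ^ 2 + 1) :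
    (A + (A + C) + 2 * A * (A + (A + C)) * (A + C) + 2 * A * (A + (A + C)) * (A + C)) *
      (1 / A + 1 / (A + C) + 1 / (2 * A * (A + (A + C)) * (A + C)) +
        1 / (2 * A * (A + (A + C)) * (A + C))) =
      4 * (A ^ 2 + 2 * C ^ 2 + (A + C) ^ 2) + 17 := by
  have hB : 0 < A + C := by linarith
  have hA0 : A ≠ 0 := ne_of_gt hA
  have hB0 : A + C ≠ 0 := ne_of_gt hB
  have hL0 : A + (A + C) ≠ 0 := ne_of_gt (by linarith)
  have h5 : (A + (A + C)) ^ 2 + 1 = 5 * (A * (A + C)) := by linear_combination (-1 : ℚ) * h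
  have h2 : 1 / A + 1 / (A + C) + 1 / (2 * A * (A + (A + C)) * (A + C)) +
      1 / (2 * A * (A + (A + C)) * (A + C))
      = ((A + (A + C)) ^ 2 + 1) / ((A * (A + C)) * (A + (A + C))) := by
    field_simp
    ring
  rw [h2, h5]
  field_simp
  linear_combination (12 : ℚ) * h

theorem fibonacci_lucas_representation (k : ℕ) (hk : 1 ≤ k) :
    ((Nat.fib (2 * k - 1) : ℚ) + (Nat.fib (2 * k + 1) : ℚ) +
        (2 * Nat.fib (2 * k - 1) * lucas (2 * k) * Nat.fib (2 * k + 1) : ℚ) +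
        (2 * Nat.fib (2 * k - 1) * lucas (2 * k) * Nat.fib (2 * k + 1) : ℚ)) *
      (1 / (Nat.fib (2 * k - 1) : ℚ) + 1 / (Nat.fib (2 * k + 1) : ℚ) +
        1 / (2 * Nat.fib (2 * k - 1) * lucas (2 * k) * Nat.fib (2 * k + 1) : ℚ) +
        1 / (2 * Nat.fib (2 * k - 1) * lucas (2 * k) * Nat.fib (2 * k + 1) : ℚ)) =
      4 * lucas (4 * k) + 17 := by
  obtain ⟨j, rfl⟩ := Nat.exists_eq_add_of_le hk
  have e1 : 2 * (1 + j) - 1 = 2 * j + 1 := by omega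
  have e2 : 2 * (1 + j) + 1 = 2 * j + 3 := by omega
  have e3 : 2 * (1 + j) = (2 * j + 1) + 1 := by omega
  have e4 : 4 * (1 + j) = (4 * j + 3) + 1 := by omega
  rw [e1, e2, e3, e4, lucas_eq_fib, lucas_eq_fib]
  have hf3 : Nat.fib (2 * j + 3) = Nat.fib (2 * j + 1) + Nat.fib (2 * j + 2) :=
    Nat.fib_add_two
  have h43 : Nat.fib (4 * j + 3) = Nat.fib (2 * j + 2) ^ 2 + Nat.fib (2 * j + 1) ^ 2 := by
    have : 4 * j + 3 = 2 * (2 * j + 1) + 1 := by ring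
    rw [this, Nat.fib_two_mul_add_one]
  have h45 : Nat.fib (4 * j + 3 + 2) = Nat.fib (2 * j + 3) ^ 2 + Nat.fib (2 * j + 2) ^ 2 := by
    have : 4 * j + 3 + 2 = 2 * (2 * j + 2) + 1 := by ring
    rw [this, Nat.fib_two_mul_add_one]
  have hA : 0 < (Nat.fib (2 * j + 1) : ℚ) := by
    exact_mod_cast Nat.fib_pos.mpr (by omega)
  have hC : 0 ≤ (Nat.fib (2 * j + 2) : ℚ) := by positivity
  have h := key (Nat.fib (2 * j + 1) : ℚ) (Nat.fib (2 * j + 2) : ℚ) hA hC (by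
    have := cassini j
    push_cast [hf3] at this ⊢
    linarith [this])
  rw [h43, h45]
  push_cast [hf3] at h ⊢
  linarith [h]
end

section
/- Let n > 16 be an integer. If x and y are positive integers with (x+x+y+y)(1/x+1/x+1/y+1/y) = n, i.e. 4(x+y)(1/x+1/y) = n, then n = 18 or n = 25. -/
theorem xxyy_representation (n : ℤ) (hn : 16 < n) (x y : ℤ) (hx : 0 < x) (hy : 0 < y)
    (h : ((x : ℚ) + x + y + y) * (1 / x + 1 / x + 1 / y + 1 / y) = n) :
    n = 18 ∨ n = 25 := by
  have hx0 : (x : ℚ) ≠ 0 := by exact_mod_cast hx.ne'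
  have hy0 : (y : ℚ) ≠ 0 := by exact_mod_cast hy.ne'
  have hz : 4 * (x + y) ^ 2 = n * (x * y) := by
    have hq : ((4 : ℚ) * (x + y) ^ 2) = n * (x * y) := by
      field_simp at h
      apply mul_left_cancel₀ hy0
      linear_combination (y : ℚ) * h
    exact_mod_cast hq
  set g : ℤ := (Int.gcd x y : ℤ) with hg
  have hgnat : 0 < Int.gcd x y := Int.gcd_pos_iff.mpr (Or.inl hx.ne')
  have hgpos : 0 < g := by rw [hg]; exact_mod_cast hgnat
  set a : ℤ := x / g with ha
  set b : ℤ := y / g with hb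
  have hxa : x = g * a := (Int.mul_ediv_cancel' (Int.gcd_dvd_left x y)).symm
  have hyb : y = g * b := (Int.mul_ediv_cancel' (Int.gcd_dvd_right x y)).symm
  have hapos : 0 < a :=
    ((mul_pos_iff.mp (hxa ▸ hx)).resolve_right (fun hh => absurd hh.1 (by linarith))).2
  have hbpos : 0 < b :=
    ((mul_pos_iff.mp (hyb ▸ hy)).resolve_right (fun hh => absurd hh.1 (by linarith))).2
  have hcop : Int.gcd a b = 1 := Int.gcd_div_gcd_div_gcd hgnat
  rw [hxa, hyb] at hz
  have heq : 4 * (a + b) ^ 2 = n * (a * b) := by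
    apply mul_left_cancel₀ (pow_ne_zero 2 hgpos.ne')
    linear_combination hz
  have hc : IsCoprime a b := Int.isCoprime_iff_gcd_eq_one.mpr hcop
  have hca : IsCoprime a (a + b) := by
    have := hc.add_mul_left_right 1; rwa [mul_one, add_comm b a] at this
  have hcb : IsCoprime b (a + b) := by
    have := hc.symm.add_mul_left_right 1; rwa [mul_one] at this
  have h1 : IsCoprime (a * b) ((a + b) ^ 2) := (hca.mul_left hcb).pow_right
  have hdvd : a * b ∣ 4 := h1.dvd_of_dvd_mul_right ⟨n, by linear_combination heq⟩
  have ha4 : a ≤ 4 := Int.le_of_dvd (by norm_num) ((dvd_mul_right a b).trans hdvd)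
  have hb4 : b ≤ 4 := Int.le_of_dvd (by norm_num) ((dvd_mul_left b a).trans hdvd)
  interval_cases a <;> interval_cases b <;> (try norm_num at heq) <;> omega
end

section
/- Let n > 16 be an integer. If x and y are positive integers with (x+y+y+y)(1/x+1/y+1/y+1/y) = n, then n = 20. -/
theorem xyyy_representation (n : ℤ) (hn : 16 < n) (x y : ℤ) (hx : 0 < x) (hy : 0 < y)
    (h : ((x : ℚ) + y + y + y) * (1 / x + 1 / y + 1 / y + 1 / y) = n) : n = 20 := by
  have hx0 : (x:ℚ) ≠ 0 := Int.cast_ne_zero.mpr hx.ne'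
  have hy0 : (y:ℚ) ≠ 0 := Int.cast_ne_zero.mpr hy.ne'
  have key : 3*x^2 + 3*y^2 = (n-10)*(x*y) := by
    have h2 : ((3*x^2 + 3*y^2 : ℤ) : ℚ) = (((n-10)*(x*y) : ℤ) : ℚ) := by
      have h' : ((x:ℚ)+3*y)*(1/x+3/y) = n := by linear_combination h
      field_simp at h'
      push_cast
      linear_combination h'
    exact_mod_cast h2
  set g : ℕ := Int.gcd x y with hgdef
  have hgpos : 0 < (g:ℤ) := by
    have : g ≠ 0 := fun h0 => hx.ne' (Int.gcd_eq_zero_iff.mp h0).1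
    positivity
  obtain ⟨a, ha⟩ : (g:ℤ) ∣ x := Int.gcd_dvd_left x y
  obtain ⟨b, hb⟩ : (g:ℤ) ∣ y := Int.gcd_dvd_right x y
  have hapos : 0 < a := by nlinarith [ha ▸ hx]
  have hbpos : 0 < b := by nlinarith [hb ▸ hy]
  have hco : IsCoprime a b := by
    rw [Int.isCoprime_iff_gcd_eq_one]
    have haq : a = x / g := by rw [ha]; exact (Int.mul_ediv_cancel_left _ hgpos.ne').symm
    have hbq : b = y / g := by rw [hb]; exact (Int.mul_ediv_cancel_left _ hgpos.ne').symm
    rw [haq, hbq]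
    exact Int.gcd_div_gcd_div_gcd (Nat.pos_of_ne_zero (fun h0 => hx.ne' (Int.gcd_eq_zero_iff.mp h0).1))
  have key2 : 3*a^2 + 3*b^2 = (n-10)*(a*b) := by
    have hg2 : ((g:ℤ))^2 ≠ 0 := pow_ne_zero _ hgpos.ne'
    apply mul_left_cancel₀ hg2
    rw [ha, hb] at key
    linear_combination key
  have hda : a ∣ 3 := by
    have : a ∣ 3 * b^2 := ⟨(n-10)*b - 3*a, by linear_combination key2⟩
    exact (hco.pow_right (n := 2)).dvd_of_dvd_mul_right this
  have hdb : b ∣ 3 := by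
    have : b ∣ 3 * a^2 := ⟨(n-10)*a - 3*b, by linear_combination key2⟩
    exact (hco.symm.pow_right (n := 2)).dvd_of_dvd_mul_right this
  have ha3 : a ≤ 3 := Int.le_of_dvd (by norm_num) hda
  have hb3 : b ≤ 3 := Int.le_of_dvd (by norm_num) hdb
  interval_cases a <;> interval_cases b <;> omega
end

section
/- On the curve E_{n,z}: Y^2 = X(X^2 + (nz(nz-2z^2-8z-2)+(z^2-1)^2)X + 16nz^3(z+1)^2), the double of the point P = (4z(1+z)^2, 4z(1+z)^2(nz-(z+1)^2)) under the elliptic curve group law equals (4z^2, -4z^2(nz+z^2+1)). -/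
/-- The elliptic curve `E_{n,z} : Y² = X(X² + (nz(nz-2z²-8z-2)+(z²-1)²)X + 16nz³(z+1)²)`
in Weierstrass form. -/
def Enz (n : ℤ) (z : ℚ) : WeierstrassCurve.Affine ℚ where
  a₁ := 0
  a₂ := (n : ℚ) * z * ((n : ℚ) * z - 2 * z ^ 2 - 8 * z - 2) + (z ^ 2 - 1) ^ 2
  a₃ := 0
  a₄ := 16 * (n : ℚ) * z ^ 3 * (z + 1) ^ 2
  a₆ := 0

lemma some_eq_some_aux {F : Type*} [Field F] {W : WeierstrassCurve.Affine F}
    {x₁ y₁ x₂ y₂ : F} (h₁ : W.Nonsingular x₁ y₁) (h₂ : W.Nonsingular x₂ y₂)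
    (hx : x₁ = x₂) (hy : y₁ = y₂) :
    WeierstrassCurve.Affine.Point.some _ _ h₁ = WeierstrassCurve.Affine.Point.some _ _ h₂ := by
  subst hx; subst hy; rfl

theorem double_of_P (n : ℤ) (hn : 16 < n) (z : ℚ) (hz : 0 < z)
    (hP : (Enz n z).Nonsingular (4 * z * (1 + z) ^ 2)
      (4 * z * (1 + z) ^ 2 * ((n : ℚ) * z - (z + 1) ^ 2)))
    (hQ : (Enz n z).Nonsingular (4 * z ^ 2) (-(4 * z ^ 2 * ((n : ℚ) * z + z ^ 2 + 1)))) :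
    (WeierstrassCurve.Affine.Point.some _ _ hP) + (WeierstrassCurve.Affine.Point.some _ _ hP) =
      WeierstrassCurve.Affine.Point.some _ _ hQ := by
  set x₁ : ℚ := 4 * z * (1 + z) ^ 2 with hx₁
  set y₁ : ℚ := 4 * z * (1 + z) ^ 2 * ((n : ℚ) * z - (z + 1) ^ 2) with hy₁
  have hz0 : z ≠ 0 := ne_of_gt hz
  have hz1 : (1 + z) ≠ 0 := by positivity
  -- the factor n*z - (z+1)^2 is nonzero, using the curve equation
  have hne : (n : ℚ) * z - (z + 1) ^ 2 ≠ 0 := by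
    intro h
    obtain ⟨-, hdisj⟩ := ((Enz n z).nonsingular_iff' x₁ y₁).mp hP
    rcases hdisj with h1 | h2
    · apply h1
      simp only [Enz, hx₁, hy₁]
      linear_combination -((-8:ℚ)*z + (-48:ℚ)*z^2 + (-80:ℚ)*z^3 + (-48:ℚ)*z^4 + (-8:ℚ)*z^5
        + (8:ℚ)*(n:ℚ)*z^2 + (16:ℚ)*(n:ℚ)*z^3 + (8:ℚ)*(n:ℚ)*z^4) * h
    · apply h2
      simp only [Enz, hx₁, hy₁]
      linear_combination (8*z*(1+z)^2) * h
  have hy0 : y₁ ≠ 0 := by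
    simp only [hy₁]
    exact mul_ne_zero (by positivity) hne
  have hy : y₁ ≠ (Enz n z).negY x₁ y₁ := by
    simp only [WeierstrassCurve.Affine.negY, Enz]
    intro h
    apply hy0
    linarith [h]
  rw [WeierstrassCurve.Affine.Point.add_self_of_Y_ne hy]
  have hs : (Enz n z).slope x₁ x₁ y₁ y₁ =
      (3 * x₁ ^ 2 + 2 * (Enz n z).a₂ * x₁ + (Enz n z).a₄ - (Enz n z).a₁ * y₁)
        / (y₁ - (Enz n z).negY x₁ y₁) :=
    WeierstrassCurve.Affine.slope_of_Y_ne rfl hy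
  have hden : y₁ - (Enz n z).negY x₁ y₁ = 2 * y₁ := by
    simp [WeierstrassCurve.Affine.negY, Enz]; ring
  apply some_eq_some_aux
  · -- x-coordinate
    rw [WeierstrassCurve.Affine.addX, hs, hden]
    show _ - (Enz n z).a₂ - x₁ - x₁ = 4 * z ^ 2
    simp only [Enz, hx₁, hy₁]
    have hne' : z * (n:ℚ) - (z + 1) ^ 2 ≠ 0 := by rwa [mul_comm]
    field_simp
    ring
  · -- y-coordinate
    rw [WeierstrassCurve.Affine.addY, WeierstrassCurve.Affine.negAddY,
      WeierstrassCurve.Affine.addX, WeierstrassCurve.Affine.negY, hs, hden]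
    simp only [Enz, hx₁, hy₁]
    have hne' : z * (n:ℚ) - (z + 1) ^ 2 ≠ 0 := by rwa [mul_comm]
    field_simp
    ring
end

section
/- The discriminant of the cubic X(X^2 + (nz(nz-2z^2-8z-2)+(z^2-1)^2)X + 16nz^3(z+1)^2) in X equals 256(z+1)^4 z^6 (z^2 n^2 - 2z(z^2+6z+1)n + (z-1)^4)(nz-(z+1)^2)^2 n^2 up to the standard normalization, and for every rational z > 0 this quantity is nonzero whenever n is an integer with n > 16. Hence E_{n,z} is nonsingular for all n > 16 and z > 0. -/
lemma aux_sq_int (q : ℚ) (m : ℤ) (h : q ^ 2 = (m : ℚ)) : ∃ k : ℤ, q = (k : ℚ) := by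
  have hd : (q ^ 2).den = 1 := by rw [h]; exact Rat.den_intCast m
  rw [Rat.den_pow] at hd
  have : q.den = 1 := by nlinarith [q.pos]
  exact ⟨q.num, ((Rat.den_eq_one_iff q).mp this).symm⟩

lemma aux_rat_root (r : ℚ) (u : ℤ) (hr : 0 < r) (h : r ^ 2 - (u : ℚ) * r + 1 = 0) : r = 1 := by
  set a : ℤ := r.num with ha
  set b : ℤ := (r.den : ℤ) with hb
  have hbpos : 0 < b := by rw [hb]; exact_mod_cast r.pos
  have hbz : (b : ℚ) ≠ 0 := by exact_mod_cast hbpos.ne'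
  have hrab : r = (a : ℚ) / (b : ℚ) := (Rat.num_div_den r).symm
  have hint : a ^ 2 - u * a * b + b ^ 2 = 0 := by
    have h2 := h
    rw [hrab] at h2
    field_simp at h2
    have h3 : (b : ℚ) * (((a : ℚ)) ^ 2 - (u : ℚ) * a * b + (b : ℚ) ^ 2) = 0 := by
      linear_combination (b : ℚ) * h2
    have h4 := (mul_eq_zero.mp h3).resolve_left hbz
    exact_mod_cast h4
  have hcop : IsCoprime a b := Int.isCoprime_iff_gcd_eq_one.mpr r.reduced
  have hba : b ∣ a ^ 2 := ⟨u * a - b, by linarith⟩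
  have hb1 : b = 1 := by
    have hbu : IsUnit b := (hcop.symm.pow_right).isUnit_of_dvd' (dvd_refl b) hba
    rcases Int.isUnit_iff.mp hbu with h1 | h1
    · exact h1
    · omega
  have hint' : a ^ 2 - u * a + 1 = 0 := by rw [hb1] at hint; linarith
  have hab : a ∣ 1 := ⟨u - a, by linear_combination hint'⟩
  have hapos : 0 < a := Rat.num_pos.mpr hr
  have ha1 : a = 1 := Int.eq_one_of_dvd_one hapos.le hab
  rw [hrab, ha1, hb1]; norm_num

theorem discriminant_nonzero (n : ℤ) (hn : 16 < n) (z : ℚ) (hz : 0 < z) :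
    (16 * (n : ℚ) * z ^ 3 * (z + 1) ^ 2) ^ 2 *
        (((n : ℚ) * z * ((n : ℚ) * z - 2 * z ^ 2 - 8 * z - 2) + (z ^ 2 - 1) ^ 2) ^ 2 -
          4 * (16 * (n : ℚ) * z ^ 3 * (z + 1) ^ 2)) =
      256 * (z + 1) ^ 4 * z ^ 6 *
        (z ^ 2 * (n : ℚ) ^ 2 - 2 * z * (z ^ 2 + 6 * z + 1) * n + (z - 1) ^ 4) *
        ((n : ℚ) * z - (z + 1) ^ 2) ^ 2 * (n : ℚ) ^ 2 ∧
    256 * (z + 1) ^ 4 * z ^ 6 *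
        (z ^ 2 * (n : ℚ) ^ 2 - 2 * z * (z ^ 2 + 6 * z + 1) * n + (z - 1) ^ 4) *
        ((n : ℚ) * z - (z + 1) ^ 2) ^ 2 * (n : ℚ) ^ 2 ≠ 0 := by
  have hNpos : (0 : ℚ) < (n : ℚ) := by exact_mod_cast (by omega : (0:ℤ) < n)
  have hN : (n : ℚ) ≠ 0 := hNpos.ne'
  constructor
  · ring
  · -- factor A : n*z - (z+1)^2 ≠ 0
    have hA : (n : ℚ) * z - (z + 1) ^ 2 ≠ 0 := by
      intro hA0
      have hroot : z ^ 2 - ((n - 2 : ℤ) : ℚ) * z + 1 = 0 := by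
        push_cast
        linear_combination -hA0
      have hz1 := aux_rat_root z (n - 2) hz hroot
      rw [hz1] at hA0
      have : (n : ℚ) = 4 := by linear_combination hA0
      have : n = 4 := by exact_mod_cast this
      omega
    -- factor Q : quadratic in n ≠ 0
    have hQ : z ^ 2 * (n : ℚ) ^ 2 - 2 * z * (z ^ 2 + 6 * z + 1) * n + (z - 1) ^ 4 ≠ 0 := by
      intro hQ0
      have key : ((n : ℚ) * z - (z ^ 2 + 6 * z + 1)) ^ 2 = 16 * z * (z + 1) ^ 2 := by
        linear_combination hQ0
      have hz1 : z + 1 ≠ 0 := by positivity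
      set c : ℚ := ((n : ℚ) * z - (z ^ 2 + 6 * z + 1)) / (4 * (z + 1)) with hcdef
      have hc2 : c ^ 2 = z := by
        rw [hcdef]
        rw [div_pow]
        rw [div_eq_iff (by positivity)]
        linear_combination key
      have hcne : c ≠ 0 := by
        intro h0; rw [h0] at hc2; simp at hc2; exact hz.ne' hc2.symm
      have hkey2 : (n : ℚ) * z - (z ^ 2 + 6 * z + 1) = 4 * c * (z + 1) := by
        rw [hcdef]; field_simp
      have hncc : (n : ℚ) * c ^ 2 = (c + 1) ^ 4 := by
        linear_combination hkey2 + ((n : ℚ) - c ^ 2 - z - 6 - 4 * c) * hc2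
      have hv : ((c + 1) ^ 2 / c) ^ 2 = ((n : ℤ) : ℚ) := by
        rw [div_pow, div_eq_iff (by positivity)]
        linear_combination -hncc
      obtain ⟨k, hk⟩ := aux_sq_int _ n hv
      have hck : (c + 1) ^ 2 = c * (k : ℚ) := by
        rw [div_eq_iff hcne] at hk
        linear_combination hk
      rcases lt_or_gt_of_ne hcne with hneg | hpos
      · -- c < 0
        have hroot : (-c) ^ 2 - ((2 - k : ℤ) : ℚ) * (-c) + 1 = 0 := by
          push_cast
          linear_combination hck
        have h1 := aux_rat_root (-c) (2 - k) (by linarith) hroot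
        have hc1 : c = -1 := by linarith
        rw [hc1] at hncc
        norm_num at hncc
        omega
      · -- c > 0
        have hroot : c ^ 2 - ((k - 2 : ℤ) : ℚ) * c + 1 = 0 := by
          push_cast
          linear_combination hck
        have h1 := aux_rat_root c (k - 2) hpos hroot
        rw [h1] at hncc
        have : (n : ℚ) = 16 := by linear_combination hncc
        have : n = 16 := by exact_mod_cast this
        omega
    exact mul_ne_zero (mul_ne_zero (mul_ne_zero (by positivity) hQ) (pow_ne_zero 2 hA))
      (pow_ne_zero 2 hN)
end
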